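/- Let E be a W*-correspondence from M to N, and let σ: M → B(H), τ: N → B(K) be normal representations. Define E^{τ,σ} = {η ∈ B(H, E ⊗_τ K) : ησ(a) = (φ(a) ⊗ I_K)η for all a ∈ M}. Then E^{τ,σ}, with actions X·η·Y := (I_E ⊗ X)ηY for X ∈ τ(N)' and Y ∈ σ(M)', and inner product ⟨η₁,η₂⟩ := η₁*η₂, is a W*-correspondence from τ(N)' to σ(M)'. -/

import Mathlib

noncomputable section

/-- A (right) Hilbert C*-module structure on `E` over `B`. -/
structure CStarModuleStr (B : Type*) (E : Type*)
    [NonUnitalNormedRing B] [StarRing B] [PartialOrder B] [Module ℂ B]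
    [NormedAddCommGroup E] [NormedSpace ℂ E] where
  smulR : E → B → E
  ip : E → E → B
  smulR_add : ∀ x y b, smulR (x + y) b = smulR x b + smulR y b
  smulR_add' : ∀ x b c, smulR x (b + c) = smulR x b + smulR x c
  smulR_mul : ∀ x b c, smulR x (b * c) = smulR (smulR x b) c
  ip_add_right : ∀ x y z, ip x (y + z) = ip x y + ip x z
  ip_smul_right : ∀ (c : ℂ) x y, ip x (c • y) = c • ip x y
  ip_smulR_right : ∀ x y b, ip x (smulR y b) = ip x y * b
  ip_star : ∀ x y, star (ip x y) = ip y x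
  ip_nonneg : ∀ x, 0 ≤ ip x x
  ip_definite : ∀ x, ip x x = 0 → x = 0
  norm_eq : ∀ x : E, ‖x‖ = Real.sqrt ‖ip x x‖

/-- A C*-correspondence structure from `A` to `B` on the bimodule `E`. -/
structure CorrStr (A B E : Type*)
    [NonUnitalNormedRing A] [StarRing A]
    [NonUnitalNormedRing B] [StarRing B] [PartialOrder B] [Module ℂ B]
    [NormedAddCommGroup E] [NormedSpace ℂ E] extends CStarModuleStr B E where
  lS : A → E →ₗ[ℂ] E
  lS_add : ∀ a a', lS (a + a') = lS a + lS a'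
  lS_mul : ∀ a a' x, lS (a * a') x = lS a (lS a' x)
  lS_adj : ∀ a x y, ip (lS a x) y = ip x (lS (star a) y)
  lS_smulR : ∀ a x b, lS a (smulR x b) = smulR (lS a x) b

/-- Data witnessing that the Hilbert space `EK` is the interior tensor product
`E ⊗_τ K` of the correspondence `E` with the representation `τ` of `B` on `K`. -/
structure TensorData {A B E : Type*}
    [NonUnitalNormedRing A] [StarRing A]
    [NonUnitalNormedRing B] [StarRing B] [PartialOrder B] [Module ℂ B]
    [NormedAddCommGroup E] [NormedSpace ℂ E] (C : CorrStr A B E)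
    {K : Type*} [NormedAddCommGroup K] [InnerProductSpace ℂ K] [CompleteSpace K]
    (τ : B → K →L[ℂ] K)
    (EK : Type*) [NormedAddCommGroup EK] [InnerProductSpace ℂ EK] [CompleteSpace EK] where
  tp : E →ₗ[ℂ] K →ₗ[ℂ] EK
  inner_tp : ∀ ξ₁ h₁ ξ₂ h₂,
    (inner ℂ (tp ξ₁ h₁) (tp ξ₂ h₂) : ℂ) = inner ℂ h₁ (τ (C.ip ξ₁ ξ₂) h₂)
  balance : ∀ ξ b h, tp (C.smulR ξ b) h = tp ξ (τ b h)
  total : Dense (Submodule.span ℂ {v : EK | ∃ ξ h, v = tp ξ h} : Set EK)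
  ampL : A → EK →L[ℂ] EK
  ampL_tp : ∀ a ξ h, ampL a (tp ξ h) = tp (C.lS a ξ) h


variable {M N : Type*}
    [NormedRing M] [StarRing M] [CStarRing M] [NormedAlgebra ℂ M]
      [StarModule ℂ M] [PartialOrder M] [StarOrderedRing M] [CompleteSpace M]
    [NormedRing N] [StarRing N] [CStarRing N] [NormedAlgebra ℂ N]
      [StarModule ℂ N] [PartialOrder N] [StarOrderedRing N] [CompleteSpace N]
    {E : Type*} [NormedAddCommGroup E] [NormedSpace ℂ E]
    {H : Type*} [NormedAddCommGroup H] [InnerProductSpace ℂ H] [CompleteSpace H]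
    {K : Type*} [NormedAddCommGroup K] [InnerProductSpace ℂ K] [CompleteSpace K]

/-- The `τ,σ`-dual of the correspondence `E` from `M` to `N`:
all bounded operators `η : H → E ⊗_τ K` with `η σ(a) = (φ(a) ⊗ I) η`. -/
def DualCorr (C : CorrStr M N E) (σ : M →⋆ₐ[ℂ] (H →L[ℂ] H))
    (τ : N →⋆ₐ[ℂ] (K →L[ℂ] K))
    {EK : Type*} [NormedAddCommGroup EK] [InnerProductSpace ℂ EK]
    [CompleteSpace EK] (td : TensorData C (fun b => τ b) EK) :
    Set (H →L[ℂ] EK) :=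
  {η | ∀ a : M, η ∘L σ a = td.ampL a ∘L η}


set_option linter.unusedSectionVars false

/-- Two vectors agreeing in inner product against a set with dense span are equal. -/
private lemma dense_inner_ext {EK : Type*} [NormedAddCommGroup EK]
    [InnerProductSpace ℂ EK] {s : Set EK}
    (hs : Dense (Submodule.span ℂ s : Set EK)) {x y : EK}
    (h : ∀ v ∈ s, (inner ℂ v x : ℂ) = inner ℂ v y) : x = y := by
  have hf : (innerSL ℂ (x - y) : EK →L[ℂ] ℂ) = 0 := by
    refine ContinuousLinearMap.ext_on hs (fun v hv => ?_)
    have : (inner ℂ v (x - y) : ℂ) = 0 := by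
      rw [inner_sub_right, h v hv, sub_self]
    simp only [innerSL_apply_apply, ContinuousLinearMap.zero_apply]
    rw [← inner_conj_symm, this, map_zero]
  have h2 : (inner ℂ (x - y) (x - y) : ℂ) = 0 := by
    have := congrArg (fun f : EK →L[ℂ] ℂ => f (x - y)) hf
    simpa only [innerSL_apply_apply, ContinuousLinearMap.zero_apply] using this
  rw [inner_self_eq_zero, sub_eq_zero] at h2
  exact h2

open ContinuousLinearMap in
/-- The adjoint of the amplified left action. -/
private lemma adjoint_ampL (C : CorrStr M N E)
    (τ : N →⋆ₐ[ℂ] (K →L[ℂ] K))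
    {EK : Type*} [NormedAddCommGroup EK] [InnerProductSpace ℂ EK]
    [CompleteSpace EK] (td : TensorData C (fun b => τ b) EK) (a : M) :
    adjoint (td.ampL a) = td.ampL (star a) := by
  refine ContinuousLinearMap.ext_on td.total (fun v hv => ?_)
  obtain ⟨ξ, h, rfl⟩ := hv
  refine dense_inner_ext td.total (fun w hw => ?_)
  obtain ⟨ξ', h', rfl⟩ := hw
  rw [ContinuousLinearMap.adjoint_inner_right, td.ampL_tp, td.ampL_tp,
    td.inner_tp, td.inner_tp, C.lS_adj]

open ContinuousLinearMap in
private lemma ampR_comm_ampL (C : CorrStr M N E)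
    (τ : N →⋆ₐ[ℂ] (K →L[ℂ] K))
    {EK : Type*} [NormedAddCommGroup EK] [InnerProductSpace ℂ EK]
    [CompleteSpace EK] (td : TensorData C (fun b => τ b) EK)
    (ampR : (K →L[ℂ] K) → (EK →L[ℂ] EK))
    (hampR : ∀ X : K →L[ℂ] K, (∀ b, X ∘L τ b = τ b ∘L X) →
      ∀ ξ k, ampR X (td.tp ξ k) = td.tp ξ (X k))
    (X : K →L[ℂ] K) (hX : ∀ b, X ∘L τ b = τ b ∘L X) (a : M) :
    ampR X ∘L td.ampL a = td.ampL a ∘L ampR X := by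
  refine ContinuousLinearMap.ext_on td.total (fun v hv => ?_)
  obtain ⟨ξ, h, rfl⟩ := hv
  simp only [ContinuousLinearMap.comp_apply]
  rw [td.ampL_tp, hampR X hX, hampR X hX, td.ampL_tp]

open ContinuousLinearMap in
/-- The dual `E^{τ,σ}` is a W*-correspondence from `τ(N)'`
to `σ(M)'`: it is a weak-* (in particular norm) closed subspace of
`B(H, E ⊗_τ K)`, stable under the left action of `τ(N)'` (via `I_E ⊗ X`) and
the right action of `σ(M)'`, and `⟨η₁, η₂⟩ := η₁* η₂` is a `σ(M)'`-valued
inner product on it. -/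
theorem stmt4 (C : CorrStr M N E) (σ : M →⋆ₐ[ℂ] (H →L[ℂ] H))
    (τ : N →⋆ₐ[ℂ] (K →L[ℂ] K))
    {EK : Type*} [NormedAddCommGroup EK] [InnerProductSpace ℂ EK]
    [CompleteSpace EK] (td : TensorData C (fun b => τ b) EK)
    -- the amplification `X ↦ I_E ⊗ X` of operators commuting with `τ(N)`
    (ampR : (K →L[ℂ] K) → (EK →L[ℂ] EK))
    (hampR : ∀ X : K →L[ℂ] K, (∀ b, X ∘L τ b = τ b ∘L X) →
      ∀ ξ k, ampR X (td.tp ξ k) = td.tp ξ (X k)) :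
    -- a linear subspace
    (0 : H →L[ℂ] EK) ∈ DualCorr C σ τ td ∧
    (∀ η η', η ∈ DualCorr C σ τ td → η' ∈ DualCorr C σ τ td →
        η + η' ∈ DualCorr C σ τ td) ∧
    (∀ (c : ℂ) η, η ∈ DualCorr C σ τ td → c • η ∈ DualCorr C σ τ td) ∧
    -- norm closed (being weak-* closed), hence self-dual
    IsClosed (DualCorr C σ τ td) ∧
    -- left action of the commutant `τ(N)'`
    (∀ X : K →L[ℂ] K, (∀ b, X ∘L τ b = τ b ∘L X) →
        ∀ η ∈ DualCorr C σ τ td, ampR X ∘L η ∈ DualCorr C σ τ td) ∧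
    -- right action of the commutant `σ(M)'`
    (∀ Y : H →L[ℂ] H, (∀ a, Y ∘L σ a = σ a ∘L Y) →
        ∀ η ∈ DualCorr C σ τ td, η ∘L Y ∈ DualCorr C σ τ td) ∧
    -- the inner product `η₁* η₂` takes values in `σ(M)'`
    (∀ η₁ η₂, η₁ ∈ DualCorr C σ τ td → η₂ ∈ DualCorr C σ τ td →
        ∀ a : M, (adjoint η₁ ∘L η₂) ∘L σ a = σ a ∘L (adjoint η₁ ∘L η₂)) ∧
    -- hermitian symmetry
    (∀ η₁ η₂ : H →L[ℂ] EK, adjoint (adjoint η₁ ∘L η₂) = adjoint η₂ ∘L η₁) ∧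
    -- positivity and definiteness
    (∀ η : H →L[ℂ] EK, (adjoint η ∘L η).IsPositive) ∧
    (∀ η : H →L[ℂ] EK, adjoint η ∘L η = 0 → η = 0) ∧
    -- right `σ(M)'`-linearity of the inner product
    (∀ (η₁ η₂ : H →L[ℂ] EK) (Y : H →L[ℂ] H),
        adjoint η₁ ∘L (η₂ ∘L Y) = (adjoint η₁ ∘L η₂) ∘L Y) := by
  have hclosed : IsClosed (DualCorr C σ τ td) := by
    have : DualCorr C σ τ td =
        ⋂ a : M, {η : H →L[ℂ] EK | η ∘L σ a = td.ampL a ∘L η} := by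
      ext η; simp [DualCorr, Set.mem_iInter]
    rw [this]
    refine isClosed_iInter (fun a => ?_)
    have hc1 : Continuous fun η : H →L[ℂ] EK => η ∘L σ a :=
      ((ContinuousLinearMap.compL ℂ H H EK).flip (σ a)).continuous
    have hc2 : Continuous fun η : H →L[ℂ] EK => td.ampL a ∘L η :=
      (ContinuousLinearMap.compL ℂ H EK EK (td.ampL a)).continuous
    exact isClosed_eq hc1 hc2
  refine ⟨fun a => by simp, fun η η' h h' a => by
      rw [add_comp, comp_add, h a, h' a],
    fun c η h a => by rw [smul_comp, comp_smul, h a],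
    hclosed, ?_, ?_, ?_, ?_, ?_, ?_, ?_⟩
  · intro X hX η hη a
    rw [comp_assoc, hη a, ← comp_assoc,
      ampR_comm_ampL C τ td ampR hampR X hX a, comp_assoc]
  · intro Y hY η hη a
    rw [comp_assoc, hY a, ← comp_assoc, hη a, comp_assoc]
  · intro η₁ η₂ h₁ h₂ a
    have key : adjoint η₁ ∘L td.ampL a = σ a ∘L adjoint η₁ := by
      have : td.ampL a = adjoint (td.ampL (star a)) := by
        rw [adjoint_ampL C τ td, star_star]
      rw [this, ← adjoint_comp, ← h₁ (star a), adjoint_comp]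
      congr 1
      rw [← ContinuousLinearMap.star_eq_adjoint, ← map_star, star_star]
    rw [comp_assoc, h₂ a, ← comp_assoc, key, comp_assoc]
  · intro η₁ η₂
    rw [adjoint_comp, adjoint_adjoint]
  · intro η
    exact isPositive_adjoint_comp_self η
  · intro η h
    ext x
    have : (inner ℂ (η x) (η x) : ℂ) = 0 := by
      rw [← ContinuousLinearMap.adjoint_inner_left, ← ContinuousLinearMap.comp_apply,
        h]
      simp
    simpa [inner_self_eq_zero] using this
  · intro η₁ η₂ Y
    rw [comp_assoc]


end
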